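/- Under Assumption SCD*, a bundle b ∈ B is a never strict best response if and only if there exists a stochastic bundle a ∈ Δ(B) with a ≠ b (as an element of Δ(B)) such that φ(a,t1) ≥ φ(b,t1) and φ(a,t0) ≥ φ(b,t0). -/
import Mathlib


namespace Paper

abbrev Bundle (n : ℕ) := Finset (Fin n)

variable {n : ℕ}

/-- A stochastic bundle: nonnegative weights on bundles summing to one. -/
def IsStoch (a : Bundle n → ℝ) : Prop :=
  (∀ b, 0 ≤ a b) ∧ ∑ b, a b = 1

/-- The point mass at a bundle, viewed as a stochastic bundle. -/
def pt (b : Bundle n) : Bundle n → ℝ := fun b' => if b' = b then 1 else 0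

/-- Virtual value of a stochastic bundle (linear extension). -/
def phiA (φ : Bundle n → ℝ → ℝ) (a : Bundle n → ℝ) (t : ℝ) : ℝ :=
  ∑ b, a b * φ b t

/-- A function is single-crossing on a set: its sign is monotone there. -/
def SingleCrossingOn (g : ℝ → ℝ) (T : Set ℝ) : Prop :=
  MonotoneOn (fun t => Real.sign (g t)) T ∨ AntitoneOn (fun t => Real.sign (g t)) T

/-- Assumption SCD*: differences of virtual values of stochastic bundles are
single-crossing in the type. -/
def SCDstar (φ : Bundle n → ℝ → ℝ) (t0 t1 : ℝ) : Prop :=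
  ∀ a a' : Bundle n → ℝ, IsStoch a → IsStoch a' →
    SingleCrossingOn (fun t => phiA φ a t - phiA φ a' t) (Set.Icc t0 t1)

/-- Assumption MD: differences of virtual values of deterministic bundles are
monotone in the type. -/
def MD (φ : Bundle n → ℝ → ℝ) (t0 t1 : ℝ) : Prop :=
  ∀ b b' : Bundle n,
    MonotoneOn (fun t => φ b t - φ b' t) (Set.Icc t0 t1) ∨
    AntitoneOn (fun t => φ b t - φ b' t) (Set.Icc t0 t1)

/-- No two distinct bundles have identical virtual value functions on T. -/
def Distinct (φ : Bundle n → ℝ → ℝ) (t0 t1 : ℝ) : Prop :=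
  ∀ b b' : Bundle n, b ≠ b' → ∃ t ∈ Set.Icc t0 t1, φ b t ≠ φ b' t

/-- A stochastic bundle is very weakly dominated. -/
def VWD (φ : Bundle n → ℝ → ℝ) (t0 t1 : ℝ) (a : Bundle n → ℝ) : Prop :=
  ∃ a' : Bundle n → ℝ, IsStoch a' ∧ a' ≠ a ∧
    ∀ t ∈ Set.Icc t0 t1, phiA φ a t ≤ phiA φ a' t

/-- A bundle is a never strict best response. -/
def NeverStrictBR (φ : Bundle n → ℝ → ℝ) (t0 t1 : ℝ) (b : Bundle n) : Prop :=
  ∀ t ∈ Set.Icc t0 t1, ∃ b' : Bundle n, b' ≠ b ∧ φ b t ≤ φ b' t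

/-- A menu is optimal if at every type some element attains the upper envelope. -/
def OptimalMenu (φ : Bundle n → ℝ → ℝ) (t0 t1 : ℝ) (S : Finset (Bundle n)) : Prop :=
  ∀ t ∈ Set.Icc t0 t1, ∃ b ∈ S, ∀ b' : Bundle n, φ b' t ≤ φ b t

/-- A minimal optimal menu. -/
def MinimalOptimalMenu (φ : Bundle n → ℝ → ℝ) (t0 t1 : ℝ) (S : Finset (Bundle n)) : Prop :=
  OptimalMenu φ t0 t1 S ∧ ∀ S' : Finset (Bundle n), S' ⊂ S → ¬ OptimalMenu φ t0 t1 S'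

/-- A nested menu: any two elements are comparable under set inclusion. -/
def IsNestedMenu (S : Finset (Bundle n)) : Prop :=
  ∀ b1 ∈ S, ∀ b2 ∈ S, b1 ⊆ b2 ∨ b2 ⊆ b1

/-- A tree menu: a nonempty root contained in every nonempty element, and two
incomparable elements. -/
def IsTreeMenu (S : Finset (Bundle n)) : Prop :=
  (∃ r ∈ S, r ≠ (∅ : Bundle n) ∧ ∀ b ∈ S, b ≠ (∅ : Bundle n) → r ⊆ b) ∧
  (∃ b1 ∈ S, ∃ b2 ∈ S, ¬ b1 ⊆ b2 ∧ ¬ b2 ⊆ b1)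

lemma sign_nonneg_iff' {x : ℝ} : 0 ≤ Real.sign x ↔ 0 ≤ x := by
  constructor
  · intro h
    by_contra hx
    rw [Real.sign_of_neg (lt_of_not_ge hx)] at h
    linarith
  · intro h
    rcases eq_or_lt_of_le h with h' | h'
    · simp [← h']
    · rw [Real.sign_of_pos h']; norm_num

lemma phiA_pt (φ : Bundle n → ℝ → ℝ) (b : Bundle n) (t : ℝ) : phiA φ (pt b) t = φ b t := by
  simp [phiA, pt, ite_mul]

lemma isStoch_pt (b : Bundle n) : IsStoch (pt b) := by
  constructor
  · intro b'
    unfold pt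
    split <;> norm_num
  · simp [pt]

lemma pt_ne {b b' : Bundle n} (h : b' ≠ b) : pt b' ≠ pt b := by
  intro hEq
  have := congrFun hEq b'
  simp [pt, h] at this

lemma mix_ne_pt {b b0 b1 : Bundle n} (h0 : b0 ≠ b) (h1 : b1 ≠ b) (l : ℝ) :
    (fun b' => l * pt b0 b' + (1 - l) * pt b1 b') ≠ pt b := by
  intro hEq
  have := congrFun hEq b
  simp [pt, Ne.symm h0, Ne.symm h1] at this

lemma isStoch_mix (b0 b1 : Bundle n) {l : ℝ} (h0 : 0 ≤ l) (h1 : l ≤ 1) :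
    IsStoch (fun b' => l * pt b0 b' + (1 - l) * pt b1 b') := by
  constructor
  · intro b'
    have h2 := (isStoch_pt b0).1 b'
    have h3 := (isStoch_pt b1).1 b'
    have h4 : (0:ℝ) ≤ 1 - l := by linarith
    exact add_nonneg (mul_nonneg h0 h2) (mul_nonneg h4 h3)
  · rw [Finset.sum_add_distrib, ← Finset.mul_sum, ← Finset.mul_sum,
      (isStoch_pt b0).2, (isStoch_pt b1).2]
    ring

lemma phiA_mix (φ : Bundle n → ℝ → ℝ) (l : ℝ) (b0 b1 : Bundle n) (t : ℝ) :
    phiA φ (fun b' => l * pt b0 b' + (1 - l) * pt b1 b') t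
      = l * φ b0 t + (1 - l) * φ b1 t := by
  simp only [phiA, add_mul, Finset.sum_add_distrib, mul_assoc, ← Finset.mul_sum]
  rw [show (∑ b', pt b0 b' * φ b' t) = phiA φ (pt b0) t from rfl,
      show (∑ b', pt b1 b' * φ b' t) = phiA φ (pt b1) t from rfl, phiA_pt, phiA_pt]

lemma sc_endpoint {D : ℝ → ℝ} {t0 t1 t : ℝ} (ht01 : t0 ≤ t1)
    (hsc : SingleCrossingOn D (Set.Icc t0 t1)) (htm : t ∈ Set.Icc t0 t1)
    (h : 0 ≤ D t) : 0 ≤ D t0 ∨ 0 ≤ D t1 := by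
  have h0 : t0 ∈ Set.Icc t0 t1 := Set.left_mem_Icc.2 ht01
  have h1 : t1 ∈ Set.Icc t0 t1 := Set.right_mem_Icc.2 ht01
  rcases hsc with hm | hm
  · exact Or.inr (sign_nonneg_iff'.1 (le_trans (sign_nonneg_iff'.2 h) (hm htm h1 htm.2)))
  · exact Or.inl (sign_nonneg_iff'.1 (le_trans (sign_nonneg_iff'.2 h) (hm h0 htm htm.1)))

lemma sc_all {D : ℝ → ℝ} {t0 t1 : ℝ} (ht01 : t0 ≤ t1)
    (hsc : SingleCrossingOn D (Set.Icc t0 t1))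
    (h0 : 0 ≤ D t0) (h1 : 0 ≤ D t1) : ∀ t ∈ Set.Icc t0 t1, 0 ≤ D t := by
  intro t htm
  have hm0 : t0 ∈ Set.Icc t0 t1 := Set.left_mem_Icc.2 ht01
  have hm1 : t1 ∈ Set.Icc t0 t1 := Set.right_mem_Icc.2 ht01
  rcases hsc with hm | hm
  · exact sign_nonneg_iff'.1 (le_trans (sign_nonneg_iff'.2 h0) (hm hm0 htm htm.1))
  · exact sign_nonneg_iff'.1 (le_trans (sign_nonneg_iff'.2 h1) (hm htm hm1 htm.2))

/-- **Corollary 2.** Under Assumption SCD*, a bundle `b` is a never strict best response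
if and only if some stochastic bundle `a ≠ b` has weakly larger virtual value than `b`
both at `t1` and at `t0`. -/
theorem stmt3 {n : ℕ} (hn : 1 ≤ n) (t0 t1 : ℝ) (ht : t0 < t1)
    (φ : Bundle n → ℝ → ℝ)
    (hcont : ∀ b : Bundle n, ContinuousOn (φ b) (Set.Icc t0 t1))
    (hdist : Distinct φ t0 t1)
    (hscd : SCDstar φ t0 t1)
    (b : Bundle n) :
    NeverStrictBR φ t0 t1 b ↔
      ∃ a : Bundle n → ℝ, IsStoch a ∧ a ≠ pt b ∧
        φ b t1 ≤ phiA φ a t1 ∧ φ b t0 ≤ phiA φ a t0 := by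
  classical
  have ht01 : t0 ≤ t1 := le_of_lt ht
  have hscd' : ∀ a : Bundle n → ℝ, IsStoch a →
      SingleCrossingOn (fun t => phiA φ a t - φ b t) (Set.Icc t0 t1) := by
    intro a ha
    have h := hscd a (pt b) ha (isStoch_pt b)
    have e : (fun t => phiA φ a t - phiA φ (pt b) t) = fun t => phiA φ a t - φ b t := by
      funext t; rw [phiA_pt]
    rwa [e] at h
  have hsck : ∀ b' : Bundle n,
      SingleCrossingOn (fun t => φ b' t - φ b t) (Set.Icc t0 t1) := by
    intro b'
    have h := hscd' (pt b') (isStoch_pt b')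
    have e : (fun t => phiA φ (pt b') t - φ b t) = fun t => φ b' t - φ b t := by
      funext t; rw [phiA_pt]
    rwa [e] at h
  constructor
  · intro hN
    set S0 : Finset (Bundle n) :=
      Finset.univ.filter (fun b' => b' ≠ b ∧ 0 ≤ φ b' t0 - φ b t0) with hS0
    set S1 : Finset (Bundle n) :=
      Finset.univ.filter (fun b' => b' ≠ b ∧ 0 ≤ φ b' t1 - φ b t1) with hS1
    set U : Set ℝ :=
      ⋃ b' ∈ S0, (Set.Icc t0 t1 ∩ (fun t => φ b' t - φ b t) ⁻¹' Set.Ici 0) with hU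
    set V : Set ℝ :=
      ⋃ b' ∈ S1, (Set.Icc t0 t1 ∩ (fun t => φ b' t - φ b t) ⁻¹' Set.Ici 0) with hV
    have hUc : IsClosed U := isClosed_biUnion_finset (fun b' _ =>
      ((hcont b').sub (hcont b)).preimage_isClosed_of_isClosed isClosed_Icc isClosed_Ici)
    have hVc : IsClosed V := isClosed_biUnion_finset (fun b' _ =>
      ((hcont b').sub (hcont b)).preimage_isClosed_of_isClosed isClosed_Icc isClosed_Ici)
    have hcover : Set.Icc t0 t1 ⊆ U ∪ V := by
      intro t htm
      obtain ⟨b', hne, hle⟩ := hN t htm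
      have h0 : 0 ≤ φ b' t - φ b t := by linarith
      rcases sc_endpoint ht01 (hsck b') htm h0 with h | h
      · exact Or.inl (Set.mem_biUnion
          (Finset.mem_filter.2 ⟨Finset.mem_univ _, hne, h⟩) ⟨htm, h0⟩)
      · exact Or.inr (Set.mem_biUnion
          (Finset.mem_filter.2 ⟨Finset.mem_univ _, hne, h⟩) ⟨htm, h0⟩)
    have hm0 : t0 ∈ Set.Icc t0 t1 := Set.left_mem_Icc.2 ht01
    have hm1 : t1 ∈ Set.Icc t0 t1 := Set.right_mem_Icc.2 ht01
    have hUne : (Set.Icc t0 t1 ∩ U).Nonempty := by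
      obtain ⟨b', hne, hle⟩ := hN t0 hm0
      have h0 : 0 ≤ φ b' t0 - φ b t0 := by linarith
      exact ⟨t0, hm0, Set.mem_biUnion
        (Finset.mem_filter.2 ⟨Finset.mem_univ _, hne, h0⟩) ⟨hm0, h0⟩⟩
    have hVne : (Set.Icc t0 t1 ∩ V).Nonempty := by
      obtain ⟨b', hne, hle⟩ := hN t1 hm1
      have h0 : 0 ≤ φ b' t1 - φ b t1 := by linarith
      exact ⟨t1, hm1, Set.mem_biUnion
        (Finset.mem_filter.2 ⟨Finset.mem_univ _, hne, h0⟩) ⟨hm1, h0⟩⟩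
    obtain ⟨ts, htsI, htsU, htsV⟩ :=
      isPreconnected_closed_iff.1 isPreconnected_Icc U V hUc hVc hcover hUne hVne
    rw [hU, Set.mem_iUnion₂] at htsU
    rw [hV, Set.mem_iUnion₂] at htsV
    obtain ⟨b0, hb0S, -, hb0ts⟩ := htsU
    obtain ⟨b1, hb1S, -, hb1ts⟩ := htsV
    rw [hS0, Finset.mem_filter] at hb0S
    rw [hS1, Finset.mem_filter] at hb1S
    obtain ⟨-, hb0ne, hA⟩ := hb0S
    obtain ⟨-, hb1ne, hDv⟩ := hb1S
    have hs0 : 0 ≤ φ b0 ts - φ b ts := hb0ts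
    have hs1 : 0 ≤ φ b1 ts - φ b ts := hb1ts
    by_cases hgB : 0 ≤ φ b1 t0 - φ b t0
    · refine ⟨pt b1, isStoch_pt b1, pt_ne hb1ne, ?_, ?_⟩ <;> rw [phiA_pt] <;> linarith
    by_cases hhC : 0 ≤ φ b0 t1 - φ b t1
    · refine ⟨pt b0, isStoch_pt b0, pt_ne hb0ne, ?_, ?_⟩ <;> rw [phiA_pt] <;> linarith
    push_neg at hgB hhC
    set A : ℝ := φ b0 t0 - φ b t0 with hA'
    set B : ℝ := φ b1 t0 - φ b t0 with hB'
    set C : ℝ := φ b0 t1 - φ b t1 with hC'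
    set Dv : ℝ := φ b1 t1 - φ b t1 with hDv'
    have hABpos : 0 < A - B := by linarith
    have hDCpos : 0 < Dv - C := by linarith
    set l0 : ℝ := -B / (A - B) with hl0
    set l1 : ℝ := Dv / (Dv - C) with hl1
    have hl0le1 : l0 ≤ 1 := by
      rw [hl0, div_le_one hABpos]; linarith
    have hl1nn : 0 ≤ l1 := div_nonneg hDv (le_of_lt hDCpos)
    have hl0nn : 0 ≤ l0 := div_nonneg (by linarith) (le_of_lt hABpos)
    have hl1le1 : l1 ≤ 1 := by
      rw [hl1, div_le_one hDCpos]; linarith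
    have hkey : l0 ≤ l1 := by
      by_contra hlt
      push_neg at hlt
      set l : ℝ := (l0 + l1) / 2 with hl
      have hll0 : l < l0 := by rw [hl]; linarith
      have hll1 : l1 < l := by rw [hl]; linarith
      have hlnn : 0 ≤ l := by linarith
      have hlle1 : l ≤ 1 := by linarith
      have hst := isStoch_mix b0 b1 hlnn hlle1
      have hsc := hscd' _ hst
      have hd0 : phiA φ (fun b' => l * pt b0 b' + (1 - l) * pt b1 b') t0 - φ b t0 < 0 := by
        rw [phiA_mix]
        have h1 : l * (A - B) < -B := (lt_div_iff₀ hABpos).1 hll0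
        have : l * φ b0 t0 + (1 - l) * φ b1 t0 - φ b t0 = l * (A - B) + B := by
          rw [hA', hB']; ring
        linarith
      have hd1 : phiA φ (fun b' => l * pt b0 b' + (1 - l) * pt b1 b') t1 - φ b t1 < 0 := by
        rw [phiA_mix]
        have h1 : Dv < l * (Dv - C) := (div_lt_iff₀ hDCpos).1 hll1
        have : l * φ b0 t1 + (1 - l) * φ b1 t1 - φ b t1 = Dv - l * (Dv - C) := by
          rw [hC', hDv']; ring
        linarith
      have hds : 0 ≤ phiA φ (fun b' => l * pt b0 b' + (1 - l) * pt b1 b') ts - φ b ts := by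
        rw [phiA_mix]
        have e : l * φ b0 ts + (1 - l) * φ b1 ts - φ b ts
            = l * (φ b0 ts - φ b ts) + (1 - l) * (φ b1 ts - φ b ts) := by ring
        rw [e]
        exact add_nonneg (mul_nonneg hlnn hs0) (mul_nonneg (by linarith) hs1)
      rcases sc_endpoint ht01 hsc htsI hds with h | h
      · exact absurd h (not_le.2 hd0)
      · exact absurd h (not_le.2 hd1)
    refine ⟨fun b' => l0 * pt b0 b' + (1 - l0) * pt b1 b',
      isStoch_mix b0 b1 hl0nn hl0le1, mix_ne_pt hb0ne hb1ne l0, ?_, ?_⟩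
    · rw [phiA_mix]
      have h1 : l0 * (Dv - C) ≤ Dv := (le_div_iff₀ hDCpos).1 hkey
      have e : l0 * φ b0 t1 + (1 - l0) * φ b1 t1 - φ b t1 = Dv - l0 * (Dv - C) := by
        rw [hC', hDv']; ring
      linarith
    · rw [phiA_mix]
      have h1 : l0 * (A - B) = -B := div_mul_cancel₀ (-B) (ne_of_gt hABpos)
      have e : l0 * φ b0 t0 + (1 - l0) * φ b1 t0 - φ b t0 = l0 * (A - B) + B := by
        rw [hA', hB']; ring
      linarith
  · rintro ⟨a, ha, hane, h1, h0⟩ t htm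
    have hD : 0 ≤ phiA φ a t - φ b t :=
      sc_all ht01 (hscd' a ha) (by linarith) (by linarith) t htm
    by_contra hcon
    push_neg at hcon
    have hlt : ∀ b' : Bundle n, b' ≠ b → φ b' t < φ b t := hcon
    have hex : ∃ b', b' ≠ b ∧ 0 < a b' := by
      by_contra hno
      push_neg at hno
      have hz : ∀ b' : Bundle n, b' ≠ b → a b' = 0 := fun b' h =>
        le_antisymm (hno b' h) (ha.1 b')
      apply hane
      funext b''
      by_cases hb : b'' = b
      · subst hb
        have hab : a b'' = 1 := by
          rw [← ha.2]
          exact (Finset.sum_eq_single b'' (fun x _ hx => hz x hx)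
            (fun h => absurd (Finset.mem_univ b'') h)).symm
        simp [pt, hab]
      · simp [pt, hb, hz b'' hb]
    obtain ⟨b', hb'ne, hb'pos⟩ := hex
    have hsum : phiA φ a t < ∑ b'', a b'' * φ b t := by
      refine Finset.sum_lt_sum (fun i _ => ?_) ⟨b', Finset.mem_univ b', ?_⟩
      · by_cases hi : i = b
        · subst hi; exact le_refl _
        · exact mul_le_mul_of_nonneg_left (le_of_lt (hlt i hi)) (ha.1 i)
      · exact mul_lt_mul_of_pos_left (hlt b' hb'ne) hb'pos
    rw [← Finset.sum_mul, ha.2, one_mul] at hsum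
    linarith


end Paper
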